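/- Define n×n lower triangular Toeplitz matrices over ℂ by: A has (i,j) entry a_{n−i+j} for i ≥ j and 0 otherwise; B has (i,j) entry b_{n−i+j} for i ≥ j and 0 otherwise; Ã has (i,j) entry conj(a_{i−j}) for i ≥ j and 0 otherwise; B̃ has (i,j) entry conj(b_{i−j}) for i ≥ j and 0 otherwise (indices i, j running from 1 to n), where a_j and b_j are the coefficients of z^j in A_n and B_n. Then B·B̃ = A·Ã, and consequently for any vectors α, β ∈ ℂ^n, the equation B̃β + Aα = 0 implies the equation Ãβ + Bα = 0. -/

import Mathlib

open Polynomial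

/-- The pair `(A_j, B_j)` of polynomials from the recursion (1.8a):
`A_0 = γ_n`, `B_0 = 1`, `A_{j+1}(z) = z·A_j(z) + γ_{n-j-1}·B_j(z)`,
`B_{j+1}(z) = z·conj(γ_{n-j-1})·A_j(z) + B_j(z)`. -/
noncomputable def schurAB (γ : ℕ → ℂ) (n : ℕ) : ℕ → Polynomial ℂ × Polynomial ℂ
  | 0 => (C (γ n), 1)
  | j + 1 =>
      (X * (schurAB γ n j).1 + C (γ (n - j - 1)) * (schurAB γ n j).2,
       X * C (starRingEnd ℂ (γ (n - j - 1))) * (schurAB γ n j).1 + (schurAB γ n j).2)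

/-- Lower triangular Toeplitz matrix with `(i,j)` entry `c (n - i + j)` for `i ≥ j`
(indices `1,…,n`, realized zero-based on `Fin n`), zero otherwise. -/
noncomputable def toepUp (n : ℕ) (c : ℕ → ℂ) : Matrix (Fin n) (Fin n) ℂ :=
  Matrix.of fun i j => if (j : ℕ) ≤ (i : ℕ) then c (n - ((i : ℕ) - (j : ℕ))) else 0

/-- Lower triangular Toeplitz matrix with `(i,j)` entry `conj (c (i - j))` for `i ≥ j`
(indices `1,…,n`, realized zero-based on `Fin n`), zero otherwise. -/
noncomputable def toepLowConj (n : ℕ) (c : ℕ → ℂ) : Matrix (Fin n) (Fin n) ℂ :=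
  Matrix.of fun i j => if (j : ℕ) ≤ (i : ℕ) then starRingEnd ℂ (c ((i : ℕ) - (j : ℕ))) else 0

/-!
With `P̃ = starReflect j P`, the recursion gives
`B_j B̃_j - A_j Ã_j = ∏_{i ≤ j} (1 - |γ_{n-i}|²) z ^ j`, so `B_n B̃_n` and `A_n Ã_n` have the same
coefficients in degrees `> n`. The coefficient of `z ^ (2n - d)` in `P P̃` is the `d`-th
diagonal of the product of the two lower triangular Toeplitz matrices built from `P`, which gives
`𝐁 𝐁̃ = 𝐀 𝐀̃`. Lower triangular Toeplitz matrices commute and `𝐁̃` is unitriangular, so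
`𝐁̃ (𝐀̃ β + 𝐁 α) = 𝐀̃ (𝐁̃ β) + 𝐀 𝐀̃ α = 𝐀̃ (𝐁̃ β + 𝐀 α)` vanishes together with `𝐁̃ β + 𝐀 α`.
-/

open Finset

namespace Matrix

variable {R : Type*} {n : ℕ}

def lowerToeplitz [Zero R] (n : ℕ) (f : ℕ → R) : Matrix (Fin n) (Fin n) R :=
  of fun i j => if (j : ℕ) ≤ i then f (i - j) else 0

lemma lowerToeplitz_congr [Zero R] {f g : ℕ → R} (h : ∀ d < n, f d = g d) :
    lowerToeplitz n f = lowerToeplitz n g := by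
  ext i j
  simp only [lowerToeplitz, of_apply]
  split_ifs
  · exact h _ (by omega)
  · rfl

lemma lowerToeplitz_mul [Semiring R] (f g : ℕ → R) :
    lowerToeplitz n f * lowerToeplitz n g =
      lowerToeplitz n (fun d => ∑ x ∈ antidiagonal d, f x.1 * g x.2) := by
  ext i k
  simp only [mul_apply, lowerToeplitz, of_apply]
  split_ifs with hki
  · symm
    refine sum_of_injOn (fun x => ⟨i - x.1, (Nat.sub_le _ _).trans_lt i.isLt⟩) ?_ ?_ ?_ ?_
    · intro x hx y hy hxy
      simp only [mem_coe, HasAntidiagonal.mem_antidiagonal, Fin.mk.injEq] at hx hy hxy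
      ext <;> omega
    · exact fun _ _ => mem_univ _
    · intro j _ hj
      simp only [mem_coe, HasAntidiagonal.mem_antidiagonal, Set.mem_image, not_exists,
        not_and] at hj
      split_ifs with hji hkj
      · refine absurd (Fin.ext ?_) (hj (i - j, j - k) (by omega))
        dsimp only
        omega
      all_goals simp only [mul_zero, zero_mul]
    · intro x hx
      rw [HasAntidiagonal.mem_antidiagonal] at hx
      simp only [show i - x.1 ≤ (i : ℕ) by omega, show (k : ℕ) ≤ i - x.1 by omega, if_true,
        show (i : ℕ) - (i - x.1) = x.1 by omega, show (i : ℕ) - x.1 - k = x.2 by omega]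
  · refine sum_eq_zero fun j _ => ?_
    split_ifs <;> first | omega | simp only [mul_zero, zero_mul]

lemma commute_lowerToeplitz [CommSemiring R] (f g : ℕ → R) :
    Commute (lowerToeplitz n f) (lowerToeplitz n g) := by
  simp only [Commute, SemiconjBy, lowerToeplitz_mul]
  congr! 2 with d
  rw [← Nat.sum_antidiagonal_swap]
  simp only [Prod.fst_swap, Prod.snd_swap, mul_comm]

lemma det_lowerToeplitz [CommRing R] (f : ℕ → R) : (lowerToeplitz n f).det = f 0 ^ n := by
  rw [det_of_isLowerTriangular]
  · simp [lowerToeplitz]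
  · intro i j hij
    simp [lowerToeplitz, not_le.mpr (OrderDual.toDual_lt_toDual.mp hij)]

end Matrix

namespace Polynomial

variable {R : Type*} [CommSemiring R] [StarRing R]

/-- The paper's `P̃(z) = z ^ N * conj (P (1 / conj z))`. -/
noncomputable def starReflect (N : ℕ) (P : R[X]) : R[X] :=
  reflect N (P.map (starRingEnd R))

lemma starReflect_add (N : ℕ) (P Q : R[X]) :
    starReflect N (P + Q) = starReflect N P + starReflect N Q := by
  rw [starReflect, Polynomial.map_add, reflect_add, starReflect, starReflect]

lemma starReflect_C_mul (N : ℕ) (a : R) (P : R[X]) :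
    starReflect N (C a * P) = C (starRingEnd R a) * starReflect N P := by
  rw [starReflect, Polynomial.map_mul, map_C, reflect_C_mul, starReflect]

lemma starReflect_succ {N : ℕ} {P : R[X]} (hP : P.natDegree ≤ N) :
    starReflect (N + 1) P = X * starReflect N P := by
  have h := reflect_mul (1 : R[X]) (P.map (starRingEnd R)) (F := 1) (G := N) (by simp)
    (natDegree_map_le.trans hP)
  rwa [one_mul, add_comm 1, reflect_one, pow_one] at h

lemma starReflect_succ_X_mul {N : ℕ} {P : R[X]} (hP : P.natDegree ≤ N) :
    starReflect (N + 1) (X * P) = starReflect N P := by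
  have h := reflect_mul X (P.map (starRingEnd R)) (F := 1) (G := N) natDegree_X_le
    (natDegree_map_le.trans hP)
  rwa [add_comm 1, reflect_one_X, one_mul, ← map_X (starRingEnd R), ← Polynomial.map_mul] at h

lemma coeff_mul_starReflect {N d : ℕ} {P : R[X]} (hP : P.natDegree ≤ N) (hd : d ≤ N) :
    (P * starReflect N P).coeff (2 * N - d) =
      ∑ x ∈ antidiagonal d, P.coeff (N - x.1) * starRingEnd R (P.coeff x.2) := by
  have hreflect : reflect (N + N) (P * starReflect N P) = reflect N P * P.map (starRingEnd R) := by
    rw [starReflect, reflect_mul _ _ hP (natDegree_reflect_le.trans (max_le le_rfl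
      (natDegree_map_le.trans hP))), reflect_reflect]
  have hcoeff := congrArg (coeff · d) hreflect
  simp only [coeff_reflect, revAt_le (show d ≤ N + N by omega)] at hcoeff
  rw [two_mul, hcoeff, coeff_mul]
  refine sum_congr rfl fun x hx => ?_
  rw [HasAntidiagonal.mem_antidiagonal] at hx
  rw [coeff_reflect, coeff_map, revAt_le (by omega)]

end Polynomial

open Polynomial

section Schur

variable (γ : ℕ → ℂ) (n : ℕ)

lemma natDegree_schurAB_le (j : ℕ) :
    (schurAB γ n j).1.natDegree ≤ j ∧ (schurAB γ n j).2.natDegree ≤ j := by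
  induction j with
  | zero => simp [schurAB]
  | succ j ih =>
    obtain ⟨hA, hB⟩ := ih
    constructor
    · refine (natDegree_add_le _ _).trans (max_le ?_ ?_)
      · exact (natDegree_mul_le_of_le natDegree_X_le hA).trans_eq (add_comm 1 j)
      · exact (natDegree_C_mul_le _ _).trans (by omega)
    · refine (natDegree_add_le _ _).trans (max_le ?_ (by omega))
      rw [mul_comm X, mul_assoc]
      exact (natDegree_C_mul_le _ _).trans
        ((natDegree_mul_le_of_le natDegree_X_le hA).trans_eq (add_comm 1 j))

lemma coeff_zero_schurAB_snd (j : ℕ) : (schurAB γ n j).2.coeff 0 = 1 := by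
  induction j with
  | zero => simp [schurAB]
  | succ j ih => simp [schurAB, ih]

lemma schurAB_snd_mul_starReflect (j : ℕ) :
    (schurAB γ n j).2 * starReflect j (schurAB γ n j).2 =
      (schurAB γ n j).1 * starReflect j (schurAB γ n j).1 +
        C (∏ i ∈ range (j + 1), (1 - γ (n - i) * starRingEnd ℂ (γ (n - i)))) * X ^ j := by
  induction j with
  | zero => simp [schurAB, starReflect, reflect_C]
  | succ j ih =>
    obtain ⟨hA, hB⟩ := natDegree_schurAB_le γ n j
    set A := (schurAB γ n j).1
    set B := (schurAB γ n j).2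
    set g := γ (n - j - 1)
    have hA' : (schurAB γ n (j + 1)).1 = X * A + C g * B := rfl
    have hB' : (schurAB γ n (j + 1)).2 = C (starRingEnd ℂ g) * (X * A) + B := by
      rw [schurAB]; ring
    have hA'_star : starReflect (j + 1) (schurAB γ n (j + 1)).1 =
        starReflect j A + C (starRingEnd ℂ g) * (X * starReflect j B) := by
      rw [hA', starReflect_add, starReflect_succ_X_mul hA, starReflect_C_mul, starReflect_succ hB]
    have hB'_star : starReflect (j + 1) (schurAB γ n (j + 1)).2 =
        C g * starReflect j A + X * starReflect j B := by
      rw [hB', starReflect_add, starReflect_C_mul, starReflect_succ_X_mul hA, starReflect_succ hB,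
        Complex.conj_conj]
    rw [hA'_star, hB'_star, hA', hB', prod_range_succ, C_mul, ← Nat.sub_sub]
    simp only [map_sub, map_one, map_mul]
    linear_combination (X * (1 - C g * C (starRingEnd ℂ g))) * ih

end Schur

namespace Matrix

variable {m R : Type*} [Fintype m] [DecidableEq m] [Ring R]

lemma mulVec_add_mulVec_eq_zero_of_mul_eq_mul {A B A' B' : Matrix m m R} (hB' : IsUnit B')
    (hmul : B * B' = A * A') (hA : Commute A' A) (hB : Commute B' B) (hAB : Commute B' A')
    {α β : m → R} (h : B' *ᵥ β + A *ᵥ α = 0) : A' *ᵥ β + B *ᵥ α = 0 := by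
  apply mulVec_injective_of_isUnit hB'
  have hβ : B' *ᵥ β = -(A *ᵥ α) := eq_neg_of_add_eq_zero_left h
  calc B' *ᵥ (A' *ᵥ β + B *ᵥ α) = A' *ᵥ (B' *ᵥ β) + (B * B') *ᵥ α := by
        rw [mulVec_add, mulVec_mulVec, mulVec_mulVec, hAB.eq, hB.eq, mulVec_mulVec]
    _ = B' *ᵥ 0 := by
        rw [hβ, hmul, mulVec_neg, mulVec_mulVec, hA.eq, neg_add_cancel, mulVec_zero]

end Matrix

open Matrix

lemma toepUp_eq_lowerToeplitz (n : ℕ) (c : ℕ → ℂ) :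
    toepUp n c = lowerToeplitz n (fun d => c (n - d)) := rfl

lemma toepLowConj_eq_lowerToeplitz (n : ℕ) (c : ℕ → ℂ) :
    toepLowConj n c = lowerToeplitz n (fun d => starRingEnd ℂ (c d)) := rfl

lemma toepUp_mul_toepLowConj {n : ℕ} {P : ℂ[X]} (hP : P.natDegree ≤ n) :
    toepUp n P.coeff * toepLowConj n P.coeff =
      lowerToeplitz n (fun d => (P * starReflect n P).coeff (2 * n - d)) := by
  rw [toepUp_eq_lowerToeplitz, toepLowConj_eq_lowerToeplitz, lowerToeplitz_mul]
  exact lowerToeplitz_congr fun d hd => (coeff_mul_starReflect hP hd.le).symm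

lemma isUnit_toepLowConj {n : ℕ} {c : ℕ → ℂ} (hc : c 0 = 1) : IsUnit (toepLowConj n c) := by
  rw [isUnit_iff_isUnit_det, toepLowConj_eq_lowerToeplitz, det_lowerToeplitz, hc, map_one,
    one_pow]
  exact isUnit_one

theorem stmt_6_general (n : ℕ) (γ : ℕ → ℂ)
    (a b : ℕ → ℂ) (ha : ∀ j, a j = ((schurAB γ n n).1).coeff j)
    (hb : ∀ j, b j = ((schurAB γ n n).2).coeff j) :
    toepUp n b * toepLowConj n b = toepUp n a * toepLowConj n a ∧
    ∀ α β : Fin n → ℂ,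
      (toepLowConj n b).mulVec β + (toepUp n a).mulVec α = 0 →
      (toepLowConj n a).mulVec β + (toepUp n b).mulVec α = 0 := by
  obtain ⟨hA, hB⟩ := natDegree_schurAB_le γ n n
  set A := (schurAB γ n n).1
  set B := (schurAB γ n n).2
  obtain rfl : a = A.coeff := funext ha
  obtain rfl : b = B.coeff := funext hb
  have hmul : toepUp n B.coeff * toepLowConj n B.coeff =
      toepUp n A.coeff * toepLowConj n A.coeff := by
    rw [toepUp_mul_toepLowConj hA, toepUp_mul_toepLowConj hB]
    refine lowerToeplitz_congr fun d hd => ?_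
    rw [schurAB_snd_mul_starReflect, coeff_add, coeff_C_mul_X_pow, if_neg (by omega), add_zero]
  refine ⟨hmul, fun α β => mulVec_add_mulVec_eq_zero_of_mul_eq_mul
    (isUnit_toepLowConj (coeff_zero_schurAB_snd γ n n)) hmul ?_ ?_ ?_⟩
  all_goals
    simp only [toepUp_eq_lowerToeplitz, toepLowConj_eq_lowerToeplitz]
    exact commute_lowerToeplitz _ _

/-- with `𝐀, 𝐁, 𝐀̃, 𝐁̃` the lower triangular Toeplitz matrices built from
the coefficients `a_j`, `b_j` of `A_n`, `B_n` as indicated, one has `𝐁·𝐁̃ = 𝐀·𝐀̃`, and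
consequently for all vectors `α, β ∈ ℂⁿ`, `𝐁̃β + 𝐀α = 0` implies `𝐀̃β + 𝐁α = 0`. -/
theorem stmt_6 (n : ℕ) (hn : 1 ≤ n) (γ : ℕ → ℂ)
    (hγ : ∀ j ≤ n, ‖γ j‖ < 1)
    (a b : ℕ → ℂ) (ha : ∀ j, a j = ((schurAB γ n n).1).coeff j)
    (hb : ∀ j, b j = ((schurAB γ n n).2).coeff j) :
    toepUp n b * toepLowConj n b = toepUp n a * toepLowConj n a ∧
    ∀ α β : Fin n → ℂ,
      (toepLowConj n b).mulVec β + (toepUp n a).mulVec α = 0 →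
      (toepLowConj n a).mulVec β + (toepUp n b).mulVec α = 0 :=
  stmt_6_general n γ a b ha hb
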